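/- Fix integers k ≥ 1 and m ≥ k, and let 𝒳 = {−2k·2^i : 0 ≤ i ≤ m−1} ∪ {2k·2^i : 0 ≤ i ≤ m−1} ⊆ ℝ. Consider the two-player game in which each player chooses a subset of 𝒳 of size k, the receiver is x̂ = (1/(2k))·(sum of all 2k chosen elements), and the losses are ℓ_1 = (x̂ + 1/4)² and ℓ_2 = (x̂ − 1/4)². Then for every subset S ⊆ {0,...,m−1} with |S| = k, the profile (x_1, x_2) with x_1 = {−2k·2^i : i ∈ S} and x_2 = {2k·2^i : i ∈ S} is a pure Nash equilibrium. Consequently, the game has at least binomial(m, k) distinct pure Nash equilibria. -/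

import Mathlib

noncomputable section

/-- The finite action pool `𝒳 = {−2k·2^i : 0 ≤ i ≤ m−1} ∪ {2k·2^i : 0 ≤ i ≤ m−1}`. -/
def poolX (k m : ℕ) : Finset ℝ :=
  (Finset.range m).image (fun i => -((2 * k : ℝ) * 2 ^ i)) ∪
    (Finset.range m).image (fun i => (2 * k : ℝ) * 2 ^ i)

/-- The receiver `x̂ = (1/(2k)) (∑_{v ∈ x₁} v + ∑_{v ∈ x₂} v)`. -/
def receiverS (k : ℕ) (A B : Finset ℝ) : ℝ :=
  ((∑ v ∈ A, v) + ∑ v ∈ B, v) / (2 * k)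

/-- Player 1's loss `(x̂ − t₁)²` with `t₁ = −1/4`. -/
def loss1S (k : ℕ) (A B : Finset ℝ) : ℝ := (receiverS k A B + 1 / 4) ^ 2

/-- Player 2's loss `(x̂ − t₂)²` with `t₂ = 1/4`. -/
def loss2S (k : ℕ) (A B : Finset ℝ) : ℝ := (receiverS k A B - 1 / 4) ^ 2

/-- `(x₁, x₂)` is a pure Nash equilibrium of the two-player subset-selection
game: both actions are size-`k` subsets of `𝒳`, and no player can strictly
decrease its own loss by switching to another size-`k` subset of `𝒳`. -/
def IsPureNES (k m : ℕ) (A B : Finset ℝ) : Prop :=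
  A ⊆ poolX k m ∧ B ⊆ poolX k m ∧ A.card = k ∧ B.card = k ∧
    (∀ A' ⊆ poolX k m, A'.card = k → loss1S k A B ≤ loss1S k A' B) ∧
    (∀ B' ⊆ poolX k m, B'.card = k → loss2S k A B ≤ loss2S k A B')

/-!
Every element of `𝒳` is an integer multiple of `2k`, so at every profile of actions the
receiver `x̂` is an integer. An integer lies at distance at least `1/4` from either target
`±1/4`, and the mirrored profile `x₁ = -x₂` attains this bound with `x̂ = 0`; hence no deviation
can help either player. Distinct `S` give distinct `x₂` because `i ↦ 2k·2^i` is injective.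
-/

open Finset

lemma sq_le_sq_intCast_add {t : ℝ} (ht : |t| ≤ 1 / 2) (n : ℤ) : t ^ 2 ≤ (n + t) ^ 2 := by
  obtain ⟨ht₁, ht₂⟩ := abs_le.mp ht
  obtain h | h | h : n ≤ -1 ∨ n = 0 ∨ 1 ≤ n := by omega
  · have : (n : ℝ) ≤ -1 := by exact_mod_cast h
    nlinarith
  · simp [h]
  · have : (1 : ℝ) ≤ n := by exact_mod_cast h
    nlinarith

lemma two_mul_pow_injective {k : ℕ} (hk : k ≠ 0) :
    Function.Injective fun i : ℕ => (2 * k : ℝ) * 2 ^ i := fun _ _ h =>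
  pow_right_injective₀ two_pos (by norm_num) (mul_left_cancel₀ (by positivity) h)

lemma mem_zmultiples_of_mem_poolX {k m : ℕ} {x : ℝ} (hx : x ∈ poolX k m) :
    x ∈ AddSubgroup.zmultiples (2 * k : ℝ) := by
  simp only [poolX, mem_union, mem_image, mem_range] at hx
  rcases hx with ⟨i, -, rfl⟩ | ⟨i, -, rfl⟩
  · exact ⟨-2 ^ i, by push_cast [zsmul_eq_mul]; ring⟩
  · exact ⟨2 ^ i, by push_cast [zsmul_eq_mul]; ring⟩

lemma exists_receiverS_eq_intCast {k m : ℕ} (hk : k ≠ 0) {A B : Finset ℝ}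
    (hA : A ⊆ poolX k m) (hB : B ⊆ poolX k m) : ∃ n : ℤ, receiverS k A B = n := by
  obtain ⟨n, hn⟩ : (∑ v ∈ A, v) + ∑ v ∈ B, v ∈ AddSubgroup.zmultiples (2 * k : ℝ) :=
    add_mem (sum_mem fun _ hx => mem_zmultiples_of_mem_poolX (hA hx))
      (sum_mem fun _ hx => mem_zmultiples_of_mem_poolX (hB hx))
  refine ⟨n, ?_⟩
  rw [receiverS, ← hn]
  simp only [zsmul_eq_mul]
  exact mul_div_cancel_right₀ _ (by positivity)

lemma receiverS_image_neg_self (k : ℕ) (B : Finset ℝ) :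
    receiverS k (B.image Neg.neg) B = 0 := by
  rw [receiverS, sum_image fun _ _ _ _ h => neg_injective h, sum_neg_distrib, neg_add_cancel,
    zero_div]

theorem isPureNES_of_receiverS_eq_zero {k m : ℕ} (hk : k ≠ 0) {A B : Finset ℝ}
    (hA : A ⊆ poolX k m) (hB : B ⊆ poolX k m) (hAcard : A.card = k) (hBcard : B.card = k)
    (h₀ : receiverS k A B = 0) : IsPureNES k m A B := by
  refine ⟨hA, hB, hAcard, hBcard, fun A' hA' _ => ?_, fun B' hB' _ => ?_⟩
  · obtain ⟨n, hn⟩ := exists_receiverS_eq_intCast hk hA' hB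
    simpa [loss1S, h₀, hn] using sq_le_sq_intCast_add (t := 1 / 4) (by norm_num [abs_of_pos]) n
  · obtain ⟨n, hn⟩ := exists_receiverS_eq_intCast hk hA hB'
    simpa [loss2S, h₀, hn, sub_eq_add_neg] using
      sq_le_sq_intCast_add (t := -(1 / 4)) (by norm_num [abs_of_pos]) n

theorem isPureNES_mirror {k m : ℕ} (hk : k ≠ 0) {S : Finset ℕ} (hS : S ⊆ range m)
    (hcard : S.card = k) :
    IsPureNES k m (S.image fun i => -((2 * k : ℝ) * 2 ^ i))
      (S.image fun i => (2 * k : ℝ) * 2 ^ i) := by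
  set B := S.image fun i => (2 * k : ℝ) * 2 ^ i
  have hneg : (S.image fun i => -((2 * k : ℝ) * 2 ^ i)) = B.image Neg.neg := image_image.symm
  have hBcard : B.card = k := by rw [card_image_of_injective _ (two_mul_pow_injective hk), hcard]
  refine isPureNES_of_receiverS_eq_zero hk ((image_subset_image hS).trans subset_union_left)
    ((image_subset_image hS).trans subset_union_right) ?_ hBcard ?_
  · rw [hneg, card_image_of_injective _ neg_injective, hBcard]
  · rw [hneg]
    exact receiverS_image_neg_self k B

theorem subset_game_many_pNE_general (k m : ℕ) (hk : 1 ≤ k) :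
    (∀ S ⊆ Finset.range m, S.card = k →
        IsPureNES k m (S.image (fun i => -((2 * k : ℝ) * 2 ^ i)))
          (S.image (fun i => (2 * k : ℝ) * 2 ^ i))) ∧
      ∃ T : Finset (Finset ℝ × Finset ℝ),
        Nat.choose m k ≤ T.card ∧ ∀ p ∈ T, IsPureNES k m p.1 p.2 := by
  have hk₀ : k ≠ 0 := Nat.one_le_iff_ne_zero.mp hk
  refine ⟨fun S hS hcard => isPureNES_mirror hk₀ hS hcard,
    ((range m).powersetCard k).image fun S =>
      (S.image fun i => -((2 * k : ℝ) * 2 ^ i), S.image fun i => (2 * k : ℝ) * 2 ^ i), ?_, ?_⟩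
  · rw [card_image_of_injective _ fun S T h =>
      image_injective (two_mul_pow_injective hk₀) (congrArg Prod.snd h),
      card_powersetCard, card_range]
  · simp only [forall_mem_image, mem_powersetCard]
    rintro S ⟨hS, hcard⟩
    exact isPureNES_mirror hk₀ hS hcard

/-- For `k ≥ 1` and `m ≥ k`: every size-`k` subset `S ⊆ {0, …, m−1}` yields a
pure Nash equilibrium `x₁ = {−2k·2^i : i ∈ S}`, `x₂ = {2k·2^i : i ∈ S}`;
consequently the game has at least `binomial(m, k)` distinct pure Nash
equilibria. -/
theorem subset_game_many_pNE (k m : ℕ) (hk : 1 ≤ k) (hm : k ≤ m) :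
    (∀ S ⊆ Finset.range m, S.card = k →
        IsPureNES k m (S.image (fun i => -((2 * k : ℝ) * 2 ^ i)))
          (S.image (fun i => (2 * k : ℝ) * 2 ^ i))) ∧
      ∃ T : Finset (Finset ℝ × Finset ℝ),
        Nat.choose m k ≤ T.card ∧ ∀ p ∈ T, IsPureNES k m p.1 p.2 :=
  subset_game_many_pNE_general k m hk

end
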